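/- More generally, for every n ≥ 1 and every natural number m, h(m) ∈ [k/2^n, (k+1)/2^n) if and only if m ≡ r (mod 2^n), where r is the natural number whose n-bit binary expansion is the reversal of the n-bit binary expansion of k. -/

import Mathlib

/-- `h m` reverses the binary digits of `m` and reads them as a binary fraction:
`h m = ∑ i, aᵢ 2^{-(i+1)}` where `m = ∑ i, aᵢ 2^i`. -/
noncomputable def h : ℕ → ℝ
  | 0 => 0
  | m + 1 => ((m + 1) % 2 : ℕ) / 2 + h ((m + 1) / 2) / 2
decreasing_by exact Nat.div_lt_self (Nat.succ_pos m) one_lt_two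

/-- Reversal of the `n`-bit binary expansion of `k`. -/
def bitrev (n k : ℕ) : ℕ := ∑ j ∈ Finset.range n, (k / 2 ^ j % 2) * 2 ^ (n - 1 - j)

lemma h_rec (m : ℕ) : h m = ((m % 2 : ℕ) : ℝ) / 2 + h (m / 2) / 2 := by
  cases m with
  | zero => simp [h]
  | succ m => rw [h]

lemma h_nonneg (m : ℕ) : 0 ≤ h m := by
  induction m using Nat.strong_induction_on with
  | _ m ih =>
    rcases Nat.eq_zero_or_pos m with rfl | hm
    · simp [h]
    · rw [h_rec]
      have h1 := ih (m / 2) (Nat.div_lt_self hm one_lt_two)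
      have h2 : (0:ℝ) ≤ ((m % 2 : ℕ) : ℝ) := Nat.cast_nonneg _
      linarith

lemma h_lt_one (m : ℕ) : h m < 1 := by
  induction m using Nat.strong_induction_on with
  | _ m ih =>
    rcases Nat.eq_zero_or_pos m with rfl | hm
    · simp [h]
    · rw [h_rec]
      have h1 := ih (m / 2) (Nat.div_lt_self hm one_lt_two)
      have h2 : ((m % 2 : ℕ) : ℝ) ≤ 1 := by
        have : m % 2 ≤ 1 := Nat.lt_succ_iff.mp (Nat.mod_lt _ two_pos)
        exact_mod_cast this
      linarith

lemma bitrev_succ (n k : ℕ) :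
    bitrev (n + 1) k = (k % 2) * 2 ^ n + bitrev n (k / 2) := by
  unfold bitrev
  rw [Finset.sum_range_succ']
  rw [add_comm]
  congr 1
  · simp
  · apply Finset.sum_congr rfl
    intro j hj
    congr 1
    · rw [Nat.div_div_eq_div_mul, ← pow_succ']
    · congr 1
      omega

lemma bitrev_succ' (n k : ℕ) :
    bitrev (n + 1) k = 2 * bitrev n (k % 2 ^ n) + k / 2 ^ n % 2 := by
  unfold bitrev
  rw [Finset.sum_range_succ]
  congr 1
  · rw [Finset.mul_sum]
    apply Finset.sum_congr rfl
    intro j hj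
    have hjn : j < n := Finset.mem_range.mp hj
    have hd : k % 2 ^ n / 2 ^ j % 2 = k / 2 ^ j % 2 := by
      have h1 : k % 2 ^ n % 2 ^ (j + 1) = k % 2 ^ (j + 1) :=
        Nat.mod_mod_of_dvd _ (pow_dvd_pow 2 hjn)
      have h2 : ∀ x : ℕ, x / 2 ^ j % 2 = x % 2 ^ (j + 1) / 2 ^ j := by
        intro x
        rw [pow_succ, Nat.mod_mul_right_div_self]
      rw [h2, h1, ← h2]
    rw [hd]
    have he : n + 1 - 1 - j = (n - 1 - j) + 1 := by omega
    rw [he, pow_succ]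
    ring
  · simp

lemma bitrev_lt (n k : ℕ) : bitrev n k < 2 ^ n := by
  induction n generalizing k with
  | zero => simp [bitrev]
  | succ n ih =>
    rw [bitrev_succ]
    have h1 : k % 2 ≤ 1 := Nat.lt_succ_iff.mp (Nat.mod_lt _ two_pos)
    have h2 := ih (k / 2)
    have : (k % 2) * 2 ^ n ≤ 2 ^ n := by
      calc (k % 2) * 2 ^ n ≤ 1 * 2 ^ n := Nat.mul_le_mul_right _ h1
      _ = 2 ^ n := one_mul _
    have : 2 ^ (n + 1) = 2 ^ n + 2 ^ n := by ring
    omega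

lemma bitrev_bitrev (n k : ℕ) (hk : k < 2 ^ n) : bitrev n (bitrev n k) = k := by
  induction n generalizing k with
  | zero => simp [bitrev]; omega
  | succ n ih =>
    rw [bitrev_succ n k, bitrev_succ']
    have hr : bitrev n (k / 2) < 2 ^ n := bitrev_lt n (k / 2)
    have h1 : (k % 2 * 2 ^ n + bitrev n (k / 2)) % 2 ^ n = bitrev n (k / 2) := by
      rw [Nat.add_mod, Nat.mul_mod_left, Nat.zero_add, Nat.mod_mod_of_dvd _ dvd_rfl,
        Nat.mod_eq_of_lt hr]
    have h2 : (k % 2 * 2 ^ n + bitrev n (k / 2)) / 2 ^ n % 2 = k % 2 := by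
      rw [mul_comm (k % 2), Nat.mul_add_div (Nat.two_pow_pos n),
        Nat.div_eq_of_lt hr, Nat.add_zero]
      omega
    rw [h1, h2, ih (k / 2) (by omega)]
    omega

lemma h_decomp (n m : ℕ) :
    h m = (bitrev n (m % 2 ^ n) : ℝ) / 2 ^ n + h (m / 2 ^ n) / 2 ^ n := by
  induction n generalizing m with
  | zero => simp [bitrev]
  | succ n ih =>
    rw [h_rec m, ih (m / 2)]
    have e1 : m % 2 ^ (n + 1) % 2 = m % 2 := Nat.mod_mod_of_dvd _ (dvd_pow_self 2 n.succ_ne_zero)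
    have e2 : m % 2 ^ (n + 1) / 2 = m / 2 % 2 ^ n := by
      rw [pow_succ', Nat.mod_mul_right_div_self]
    have e3 : m / 2 / 2 ^ n = m / 2 ^ (n + 1) := by
      rw [Nat.div_div_eq_div_mul, ← pow_succ']
    rw [bitrev_succ, e1, e2, e3]
    push_cast
    have : (2:ℝ) ^ n ≠ 0 := by positivity
    field_simp
    ring

theorem h_dyadic_interval_iff (n : ℕ) (hn : 1 ≤ n) (k : ℕ) (hk : k < 2 ^ n) (m : ℕ) :
    h m ∈ Set.Ico ((k : ℝ) / 2 ^ n) ((k + 1 : ℝ) / 2 ^ n) ↔ m % 2 ^ n = bitrev n k := by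
  have hd := h_decomp n m
  set r := bitrev n (m % 2 ^ n) with hr
  have hrlt : r < 2 ^ n := bitrev_lt n _
  have ht0 : 0 ≤ h (m / 2 ^ n) := h_nonneg _
  have ht1 : h (m / 2 ^ n) < 1 := h_lt_one _
  have hpow : (0:ℝ) < 2 ^ n := by positivity
  have hmem : h m ∈ Set.Ico ((r : ℝ) / 2 ^ n) ((r + 1 : ℝ) / 2 ^ n) := by
    constructor
    · rw [hd]
      have : 0 ≤ h (m / 2 ^ n) / 2 ^ n := by positivity
      linarith
    · rw [hd, ← add_div, div_lt_div_iff₀ hpow hpow]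
      nlinarith
  constructor
  · rintro ⟨hl, hu⟩
    have hrk : r = k := by
      obtain ⟨hl', hu'⟩ := hmem
      have hne : (2:ℝ) ^ n ≠ 0 := ne_of_gt hpow
      have c1 : (r : ℝ) < k + 1 := by
        have := mul_lt_mul_of_pos_right (lt_of_le_of_lt hl' hu) hpow
        rw [div_mul_cancel₀ _ hne, div_mul_cancel₀ _ hne] at this
        exact this
      have c2 : (k : ℝ) < r + 1 := by
        have := mul_lt_mul_of_pos_right (lt_of_le_of_lt hl hu') hpow
        rw [div_mul_cancel₀ _ hne, div_mul_cancel₀ _ hne] at this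
        exact this
      have : r < k + 1 := by exact_mod_cast c1
      have : k < r + 1 := by exact_mod_cast c2
      omega
    have := bitrev_bitrev n (m % 2 ^ n) (Nat.mod_lt _ (by positivity))
    rw [← hr, hrk] at this
    exact this.symm
  · intro hmk
    have hrk : r = k := by
      rw [hr, hmk, bitrev_bitrev n k hk]
    rw [hrk] at hmem
    exact hmem
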